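/- arXiv:1705.01279 — 3 statements merged into one kernel-verified Lean document; each statement's English description precedes it below -/
import Mathlib

section
/- Let n ≥ 1 and let K_1, …, K_n be pairwise disjoint nonempty compact subsets of ℂ. Suppose that for each i, h_i and u_i are holomorphic on ℂ ∖ K_i with h_i(z) → 0 and u_i(z) → 0 as z → ∞, and that Σ_{i=1}^n h_i(z) = Σ_{i=1}^n u_i(z) for every z ∈ ℂ ∖ (K_1 ∪ … ∪ K_n). Then h_i = u_i on ℂ ∖ K_i for every i. -/
/-! Fix `i` and glue `h i - u i`, holomorphic off `K i`, with `∑_{j ≠ i} (u j - h j)`, holomorphic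
off the other compacts: the two agree off all the `K j`, and the sets where they are defined
cover `ℂ` by disjointness. The glued entire function tends to `0` at infinity, so it vanishes
by Liouville's theorem. -/

open Filter Set Finset Topology

theorem Finset.sub_eq_sum_erase_sub_of_sum_eq {ι M : Type*} [AddCommGroup M] [DecidableEq ι]
    {s : Finset ι} {i : ι} (hi : i ∈ s) {f g : ι → M} (h : ∑ j ∈ s, f j = ∑ j ∈ s, g j) :
    f i - g i = ∑ j ∈ s.erase i, (g j - f j) := by
  rw [← add_sum_erase s f hi, ← add_sum_erase s g hi] at h
  rw [sum_sub_distrib]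
  grind

theorem differentiable_piecewise_of_eqOn_compl_union {𝕜 E F : Type*} [NontriviallyNormedField 𝕜]
    [NormedAddCommGroup E] [NormedSpace 𝕜 E] [NormedAddCommGroup F] [NormedSpace 𝕜 F]
    {A B : Set E} [DecidablePred (· ∈ A)] {f g : E → F} (hA : IsClosed A) (hB : IsClosed B)
    (hAB : Disjoint A B) (hf : DifferentiableOn 𝕜 f Aᶜ) (hg : DifferentiableOn 𝕜 g Bᶜ)
    (hfg : EqOn f g (A ∪ B)ᶜ) :
    Differentiable 𝕜 (A.piecewise g f) := by
  intro z
  by_cases hz : z ∈ A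
  · have hgB : EqOn (A.piecewise g f) g Bᶜ := fun w hw => by
      by_cases hwA : w ∈ A
      · simp [hwA]
      · simpa [hwA] using hfg (mem_compl (not_or.2 ⟨hwA, hw⟩))
    have hzB : Bᶜ ∈ 𝓝 z := hB.isOpen_compl.mem_nhds (hAB.notMem_of_mem_left hz)
    exact (hg.differentiableAt hzB).congr_of_eventuallyEq (hgB.eventuallyEq_of_mem hzB)
  · have hzA : Aᶜ ∈ 𝓝 z := hA.isOpen_compl.mem_nhds hz
    exact (hf.differentiableAt hzA).congr_of_eventuallyEq
      ((piecewise_eqOn_compl A g f).eventuallyEq_of_mem hzA)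

theorem eqOn_zero_of_differentiableOn_compl_of_eqOn_compl_union {E F : Type*}
    [NormedAddCommGroup E] [NormedSpace ℂ E] [Nontrivial E] [NormedAddCommGroup F]
    [NormedSpace ℂ F] {A B : Set E} {f g : E → F} (hA : IsCompact A) (hB : IsClosed B)
    (hAB : Disjoint A B) (hf : DifferentiableOn ℂ f Aᶜ) (hg : DifferentiableOn ℂ g Bᶜ)
    (hfg : EqOn f g (A ∪ B)ᶜ) (hf0 : Tendsto f (cocompact E) (𝓝 0)) :
    EqOn f 0 Aᶜ := by
  classical
  have hfA : EqOn (A.piecewise g f) f Aᶜ := piecewise_eqOn_compl A g f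
  have hentire := differentiable_piecewise_of_eqOn_compl_union hA.isClosed hB hAB hf hg hfg
  have hlim : Tendsto (A.piecewise g f) (cocompact E) (𝓝 0) :=
    hf0.congr' (hfA.eventuallyEq_of_mem hA.compl_mem_cocompact).symm
  intro z hz
  rw [← hfA hz]
  exact hentire.apply_eq_of_tendsto_cocompact z hlim

theorem stmt1_general (n : ℕ) (K : Fin n → Set ℂ)
    (hKc : ∀ i, IsCompact (K i))
    (hKdisj : ∀ i j, i ≠ j → Disjoint (K i) (K j))
    (h u : Fin n → ℂ → ℂ)
    (hhol : ∀ i, DifferentiableOn ℂ (h i) (K i)ᶜ)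
    (huol : ∀ i, DifferentiableOn ℂ (u i) (K i)ᶜ)
    (hh0 : ∀ i, Filter.Tendsto (h i) (Filter.cocompact ℂ) (nhds 0))
    (hu0 : ∀ i, Filter.Tendsto (u i) (Filter.cocompact ℂ) (nhds 0))
    (heq : ∀ z ∈ (⋃ i, K i)ᶜ, ∑ i, h i z = ∑ i, u i z) :
    ∀ i, ∀ z ∈ (K i)ᶜ, h i z = u i z := by
  classical
  intro i z hz
  set B := ⋃ j ∈ univ.erase i, K j
  have hB : IsClosed B := isClosed_biUnion_finset fun j _ => (hKc j).isClosed
  have hKB : Disjoint (K i) B :=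
    disjoint_iUnion₂_right.2 fun j hj => hKdisj i j (ne_of_mem_erase hj).symm
  have hrest : DifferentiableOn ℂ (fun w => ∑ j ∈ univ.erase i, (u j w - h j w)) Bᶜ :=
    DifferentiableOn.fun_sum fun j hj =>
      ((huol j).sub (hhol j)).mono (compl_subset_compl.2 (subset_biUnion_of_mem hj))
  have hsplit : EqOn (fun w => h i w - u i w)
      (fun w => ∑ j ∈ univ.erase i, (u j w - h j w)) (K i ∪ B)ᶜ := by
    refine fun w hw => sub_eq_sum_erase_sub_of_sum_eq (mem_univ i) (heq w ?_)
    refine compl_subset_compl.2 (iUnion_subset fun j => ?_) hw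
    by_cases hji : j = i
    · exact hji ▸ subset_union_left
    · exact (subset_biUnion_of_mem (mem_erase.2 ⟨hji, mem_univ j⟩)).trans subset_union_right
  have hlim : Tendsto (fun w => h i w - u i w) (cocompact ℂ) (𝓝 0) := by
    simpa using (hh0 i).sub (hu0 i)
  exact sub_eq_zero.1 <| eqOn_zero_of_differentiableOn_compl_of_eqOn_compl_union (hKc i) hB hKB
    ((hhol i).sub (huol i)) hrest hsplit hlim hz

/-- Uniqueness of the decomposition of a holomorphic function vanishing at infinity
into summands holomorphic off pairwise disjoint compact sets. -/
theorem stmt1 (n : ℕ) (hn : 1 ≤ n) (K : Fin n → Set ℂ)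
    (hKc : ∀ i, IsCompact (K i)) (hKne : ∀ i, (K i).Nonempty)
    (hKdisj : ∀ i j, i ≠ j → Disjoint (K i) (K j))
    (h u : Fin n → ℂ → ℂ)
    (hhol : ∀ i, DifferentiableOn ℂ (h i) (K i)ᶜ)
    (huol : ∀ i, DifferentiableOn ℂ (u i) (K i)ᶜ)
    (hh0 : ∀ i, Filter.Tendsto (h i) (Filter.cocompact ℂ) (nhds 0))
    (hu0 : ∀ i, Filter.Tendsto (u i) (Filter.cocompact ℂ) (nhds 0))
    (heq : ∀ z ∈ (⋃ i, K i)ᶜ, ∑ i, h i z = ∑ i, u i z) :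
    ∀ i, ∀ z ∈ (K i)ᶜ, h i z = u i z :=
  stmt1_general n K hKc hKdisj h u hhol huol hh0 hu0 heq
end

section
/- Let f : 𝔻 → ℂ be injective and holomorphic. The function (ζ, z) ↦ (f(ζ) − f(z))/(ζ − z) (with value f′(ζ) when ζ = z) is nonvanishing and holomorphic on 𝔻 × 𝔻, so it admits a holomorphic logarithm L(ζ, z) on 𝔻 × 𝔻; write its Taylor expansion at the origin as L(ζ, z) = Σ_{k,l ≥ 0} ω_{kl} ζ^k z^l. Then for every integer m ≥ 1 and every w ∈ 𝔻 ∖ {0}, the m-th Faber polynomial of f satisfies Φ_m(f(w)) = w^{−m} − m Σ_{l=0}^{∞} ω_{ml} w^l, the series converging for all w ∈ 𝔻. -/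
/-!
Fix `w` and put `g = L(·, w)`, so that `f u - f w = exp (g u) * (u - w)` on the disk. On the
circle `|u| = ρ < |w|` the integrand becomes `u⁻ᵐ ((u - w)⁻¹ + g' u)`. As `w` lies outside the
circle, `(u - w)⁻¹` is holomorphic inside it, and its `(m-1)`-st Taylor coefficient `-w⁻ᵐ`
produces the term `w⁻ᵐ`. Integration by parts turns `∮ u⁻ᵐ g'` into `m ∮ u⁻ᵐ⁻¹ g`, which is
`2πi m` times the `m`-th Taylor coefficient `∑ₗ ω_{ml} wˡ` of `g`.
-/

open MeasureTheory Filter Set Metric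

open Complex Real

theorem circleIntegrable_zpow_mul {q : ℂ → ℂ} {ρ : ℝ} (hρ : 0 < ρ)
    (hq : ContinuousOn q (sphere 0 ρ)) (k : ℤ) : CircleIntegrable (fun u => u ^ k * q u) 0 ρ :=
  (((continuousOn_id (s := sphere (0 : ℂ) ρ)).zpow₀ k fun u hu =>
    Or.inl (ne_zero_of_mem_sphere hρ.ne' ⟨u, hu⟩)).mul hq).circleIntegrable hρ.le

theorem circleIntegral_zpow_neg_sub_one_mul_eq_coeff {q : ℂ → ℂ} {a : ℕ → ℂ} {r ρ : ℝ}
    (hρ : 0 < ρ) (hρr : ρ < r) (hq : DifferentiableOn ℂ q (ball 0 r))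
    (ha : ∀ u ∈ ball (0 : ℂ) r, HasSum (fun k => a k * u ^ k) (q u)) (m : ℕ) :
    (∮ u in C(0, ρ), u ^ (-(m : ℤ) - 1) * q u) = 2 * π * I * a m := by
  have hρ' : (ρ.toNNReal : ℝ) = ρ := Real.coe_toNNReal ρ hρ.le
  have hcauchy : HasFPowerSeriesAt q (cauchyPowerSeries q 0 ρ) 0 := by
    have := (hq.mono (closedBall_subset_ball (hρ'.symm ▸ hρr))).hasFPowerSeriesOnBall
      (R := ρ.toNNReal) (by simpa using hρ)
    exact hρ' ▸ this.hasFPowerSeriesAt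
  have hscalars : HasFPowerSeriesAt q (FormalMultilinearSeries.ofScalars ℂ a) 0 := by
    rw [hasFPowerSeriesAt_iff]
    filter_upwards [ball_mem_nhds (0 : ℂ) (hρ.trans hρr)] with u hu
    simpa [mul_comm] using ha u hu
  have hcoeff : a m = (2 * π * I)⁻¹ • ∮ u in C(0, ρ), (1 / (u - 0)) ^ m • (u - 0)⁻¹ • q u := by
    rw [← FormalMultilinearSeries.coeff_ofScalars (𝕜 := ℂ) (p := a),
      hscalars.eq_formalMultilinearSeries hcauchy]
    exact cauchyPowerSeries_apply q 0 ρ m 1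
  rw [hcoeff, smul_eq_mul, ← mul_assoc, mul_inv_cancel₀ two_pi_I_ne_zero, one_mul]
  refine circleIntegral.integral_congr hρ.le fun u hu => ?_
  have hu0 : u ≠ 0 := ne_zero_of_mem_sphere hρ.ne' ⟨u, hu⟩
  simp [zpow_sub₀ hu0, div_eq_mul_inv, mul_assoc]

theorem hasSum_inv_sub_of_norm_lt {u w : ℂ} (h : ‖u‖ < ‖w‖) :
    HasSum (fun k => -(w ^ (k + 1))⁻¹ * u ^ k) (u - w)⁻¹ := by
  have hw : w ≠ 0 := norm_pos_iff.mp ((norm_nonneg u).trans_lt h)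
  have hwu : w - u ≠ 0 := sub_ne_zero.mpr fun e => h.ne (e ▸ rfl)
  have hlt : ‖u / w‖ < 1 := by rwa [norm_div, div_lt_one (norm_pos_iff.mpr hw)]
  have hgeom := (hasSum_geometric_of_norm_lt_one hlt).mul_left (-w⁻¹)
  have hlimit : -w⁻¹ * (1 - u / w)⁻¹ = (u - w)⁻¹ := by
    rw [← neg_sub w u]
    field_simp
  refine hlimit ▸ hgeom.congr_fun fun k => ?_
  rw [div_pow, pow_succ', mul_inv]
  ring

theorem circleIntegral_zpow_neg_mul_inv_sub {w : ℂ} {ρ : ℝ} (hρ : 0 < ρ) (hρw : ρ < ‖w‖)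
    {m : ℕ} (hm : 1 ≤ m) :
    (∮ u in C(0, ρ), u ^ (-(m : ℤ)) * (u - w)⁻¹) = -(2 * π * I * (w ^ m)⁻¹) := by
  obtain ⟨n, rfl⟩ := Nat.exists_eq_add_of_le' hm
  have hdiff : DifferentiableOn ℂ (fun u : ℂ => (u - w)⁻¹) (ball 0 ‖w‖) :=
    (differentiableOn_id.sub_const w).inv fun u hu =>
      sub_ne_zero.mpr fun e => (mem_ball_zero_iff.mp hu).ne (e ▸ rfl)
  have hsum : ∀ u ∈ ball (0 : ℂ) ‖w‖, HasSum (fun k => -(w ^ (k + 1))⁻¹ * u ^ k) (u - w)⁻¹ :=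
    fun u hu => hasSum_inv_sub_of_norm_lt (mem_ball_zero_iff.mp hu)
  have := circleIntegral_zpow_neg_sub_one_mul_eq_coeff hρ hρw hdiff hsum n
  push_cast at this ⊢
  rw [neg_add, ← sub_eq_add_neg, this]
  ring

theorem circleIntegral_zpow_mul_deriv {g : ℂ → ℂ} {U : Set ℂ} {ρ : ℝ} (hU : IsOpen U)
    (hg : DifferentiableOn ℂ g U) (hρ : 0 < ρ) (hρU : sphere (0 : ℂ) ρ ⊆ U) (k : ℤ) :
    (∮ u in C(0, ρ), u ^ k * deriv g u) = -k * ∮ u in C(0, ρ), u ^ (k - 1) * g u := by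
  have hint₁ : CircleIntegrable (fun u => (k : ℂ) * (u ^ (k - 1) * g u)) 0 ρ :=
    (circleIntegrable_zpow_mul hρ (hg.continuousOn.mono hρU) (k - 1)).const_smul (a := (k : ℂ))
  have hint₂ : CircleIntegrable (fun u => u ^ k * deriv g u) 0 ρ :=
    circleIntegrable_zpow_mul hρ (((hg.analyticOnNhd hU).deriv).continuousOn.mono hρU) k
  have hexact : (∮ u in C(0, ρ), (k : ℂ) * (u ^ (k - 1) * g u) + u ^ k * deriv g u) = 0 := by
    refine circleIntegral.integral_eq_zero_of_hasDerivWithinAt (f := fun u => u ^ k * g u)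
      hρ.le fun u hu => ?_
    have hgu := (hg.differentiableAt (hU.mem_nhds (hρU hu))).hasDerivAt
    have hzpow := hasDerivAt_zpow k u (Or.inl (ne_zero_of_mem_sphere hρ.ne' ⟨u, hu⟩))
    exact ((hzpow.mul hgu).congr_deriv (by ring)).hasDerivWithinAt
  rw [circleIntegral.integral_add hint₁ hint₂, circleIntegral.integral_const_mul] at hexact
  linear_combination hexact

theorem deriv_div_sub_eq_inv_sub_add_deriv {f g : ℂ → ℂ} {U : Set ℂ} {w u : ℂ} (hU : IsOpen U)
    (hg : DifferentiableOn ℂ g U) (hfg : ∀ ζ ∈ U, f ζ - f w = cexp (g ζ) * (ζ - w))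
    (hu : u ∈ U) (huw : u ≠ w) :
    deriv f u / (f u - f w) = (u - w)⁻¹ + deriv g u := by
  have hgu := (hg.differentiableAt (hU.mem_nhds hu)).hasDerivAt
  have hf_eq : f =ᶠ[nhds u] fun ζ => f w + cexp (g ζ) * (ζ - w) :=
    eventually_of_mem (hU.mem_nhds hu) fun ζ hζ => eq_add_of_sub_eq' (hfg ζ hζ)
  have hderiv : HasDerivAt (fun ζ => f w + cexp (g ζ) * (ζ - w))
      (cexp (g u) * (deriv g u * (u - w) + 1)) u :=
    ((hgu.cexp.mul ((hasDerivAt_id u).sub_const w)).const_add (f w)).congr_deriv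
      (by simp only [id_eq]; ring)
  have huw' : u - w ≠ 0 := sub_ne_zero.mpr huw
  rw [hf_eq.deriv_eq, hderiv.deriv, hfg u hu]
  field_simp [Complex.exp_ne_zero]
  ring

theorem circleIntegral_zpow_neg_mul_deriv_div_sub {f g : ℂ → ℂ} {a : ℕ → ℂ} {w : ℂ} {r ρ : ℝ}
    (hρ : 0 < ρ) (hρw : ρ < ‖w‖) (hwr : ‖w‖ < r) (hg : DifferentiableOn ℂ g (ball 0 r))
    (ha : ∀ u ∈ ball (0 : ℂ) r, HasSum (fun k => a k * u ^ k) (g u))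
    (hfg : ∀ u ∈ ball (0 : ℂ) r, f u - f w = cexp (g u) * (u - w)) {m : ℕ} (hm : 1 ≤ m) :
    (∮ u in C(0, ρ), u ^ (-(m : ℤ)) * deriv f u / (f u - f w)) =
      2 * π * I * (m * a m - (w ^ m)⁻¹) := by
  have hρr : ρ < r := hρw.trans hwr
  have hsphere : sphere (0 : ℂ) ρ ⊆ ball 0 r := sphere_subset_ball hρr
  have hne : ∀ u ∈ sphere (0 : ℂ) ρ, u ≠ w := fun u hu e =>
    hρw.ne (by rw [← e, ← mem_sphere_zero_iff_norm.mp hu])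
  have hlogDeriv : EqOn (fun u => u ^ (-(m : ℤ)) * deriv f u / (f u - f w))
      (fun u => u ^ (-(m : ℤ)) * (u - w)⁻¹ + u ^ (-(m : ℤ)) * deriv g u) (sphere 0 ρ) := by
    intro u hu
    simp only [mul_div_assoc,
      deriv_div_sub_eq_inv_sub_add_deriv isOpen_ball hg hfg (hsphere hu) (hne u hu), mul_add]
  have hint₁ : CircleIntegrable (fun u => u ^ (-(m : ℤ)) * (u - w)⁻¹) 0 ρ :=
    circleIntegrable_zpow_mul hρ ((continuousOn_id.sub continuousOn_const).inv₀ fun u hu =>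
      sub_ne_zero.mpr (hne u hu)) _
  have hint₂ : CircleIntegrable (fun u => u ^ (-(m : ℤ)) * deriv g u) 0 ρ :=
    circleIntegrable_zpow_mul hρ
      (((hg.analyticOnNhd isOpen_ball).deriv).continuousOn.mono hsphere) _
  rw [circleIntegral.integral_congr hρ.le hlogDeriv, circleIntegral.integral_add hint₁ hint₂,
    circleIntegral_zpow_neg_mul_inv_sub hρ hρw hm,
    circleIntegral_zpow_mul_deriv isOpen_ball hg hρ hsphere,
    circleIntegral_zpow_neg_sub_one_mul_eq_coeff hρ hρr hg ha m]
  push_cast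
  ring

theorem summable_row_of_summable_prod {ω : ℕ → ℕ → ℂ} {ζ z : ℂ} (hζ : ζ ≠ 0)
    (h : Summable fun p : ℕ × ℕ => ω p.1 p.2 * ζ ^ p.1 * z ^ p.2) (k : ℕ) :
    Summable fun l => ω k l * z ^ l :=
  ((h.prod_factor k).mul_right (ζ ^ k)⁻¹).congr fun l => by
    rw [mul_right_comm, mul_inv_cancel_right₀ (pow_ne_zero k hζ)]

theorem hasSum_tsum_row_mul_pow {ω : ℕ → ℕ → ℂ} {ζ z s : ℂ}
    (hrow : ∀ k, Summable fun l => ω k l * z ^ l)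
    (h : HasSum (fun p : ℕ × ℕ => ω p.1 p.2 * ζ ^ p.1 * z ^ p.2) s) :
    HasSum (fun k => (∑' l, ω k l * z ^ l) * ζ ^ k) s :=
  h.prod_fiberwise fun k => ((hrow k).hasSum.mul_right (ζ ^ k)).congr_fun fun l => by ring

theorem stmt5_general (f : ℂ → ℂ)
    (L : ℂ × ℂ → ℂ)
    (hL : DifferentiableOn ℂ L (Metric.ball 0 1 ×ˢ Metric.ball 0 1))
    (hLlog : ∀ ζ ∈ Metric.ball (0 : ℂ) 1, ∀ z ∈ Metric.ball (0 : ℂ) 1,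
      ζ ≠ z → Complex.exp (L (ζ, z)) * (ζ - z) = f ζ - f z)
    (ω : ℕ → ℕ → ℂ)
    (hω : ∀ ζ ∈ Metric.ball (0 : ℂ) 1, ∀ z ∈ Metric.ball (0 : ℂ) 1,
      HasSum (fun p : ℕ × ℕ => ω p.1 p.2 * ζ ^ p.1 * z ^ p.2) (L (ζ, z))) :
    ∀ m : ℕ, 1 ≤ m → ∀ w ∈ Metric.ball (0 : ℂ) 1, w ≠ 0 →
      ∀ ρ : ℝ, 0 < ρ → ρ < ‖w‖ →
        ∃ S : ℂ, HasSum (fun l : ℕ => ω m l * w ^ l) S ∧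
          -((2 * (Real.pi : ℂ) * Complex.I)⁻¹ *
              ∮ u in C(0, ρ), u ^ (-(m : ℤ)) * deriv f u / (f u - f w)) =
            w ^ (-(m : ℤ)) - (m : ℂ) * S := by
  intro m hm w hw hw0 ρ hρ hρw
  have hrow := summable_row_of_summable_prod hw0 (hω w hw w hw).summable
  refine ⟨_, (hrow m).hasSum, ?_⟩
  have hg : DifferentiableOn ℂ (fun u => L (u, w)) (ball 0 1) :=
    hL.comp (differentiableOn_id.prodMk (differentiableOn_const w)) fun u hu => ⟨hu, hw⟩
  have hfg : ∀ u ∈ ball (0 : ℂ) 1, f u - f w = cexp (L (u, w)) * (u - w) := by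
    intro u hu
    rcases eq_or_ne u w with rfl | huw
    · simp
    · exact (hLlog u hu w hw huw).symm
  rw [circleIntegral_zpow_neg_mul_deriv_div_sub hρ hρw (mem_ball_zero_iff.mp hw) hg
    (fun ζ hζ => hasSum_tsum_row_mul_pow hrow (hω ζ hζ w hw)) hfg hm, zpow_neg, zpow_natCast]
  field_simp [two_pi_I_ne_zero]
  ring

/-- Faber polynomials in terms of Grunsky coefficients: if `L` is a holomorphic
logarithm of `(f(ζ) - f(z))/(ζ - z)` on `𝔻 × 𝔻` with Taylor coefficients
`ω_{kl}` at the origin, then for every `m ≥ 1` and `w ∈ 𝔻 ∖ {0}` the `m`-th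
Faber polynomial (defined by a contour integral over any circle of radius
`ρ < |w|`) satisfies `Φ_m(f(w)) = w^{-m} - m ∑_{l≥0} ω_{ml} w^l`. -/
theorem stmt5 (f : ℂ → ℂ) (hf : DifferentiableOn ℂ f (Metric.ball 0 1))
    (hinj : Set.InjOn f (Metric.ball 0 1))
    (L : ℂ × ℂ → ℂ)
    (hL : DifferentiableOn ℂ L (Metric.ball 0 1 ×ˢ Metric.ball 0 1))
    (hLlog : ∀ ζ ∈ Metric.ball (0 : ℂ) 1, ∀ z ∈ Metric.ball (0 : ℂ) 1,
      ζ ≠ z → Complex.exp (L (ζ, z)) * (ζ - z) = f ζ - f z)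
    (hLdiag : ∀ ζ ∈ Metric.ball (0 : ℂ) 1, Complex.exp (L (ζ, ζ)) = deriv f ζ)
    (ω : ℕ → ℕ → ℂ)
    (hω : ∀ ζ ∈ Metric.ball (0 : ℂ) 1, ∀ z ∈ Metric.ball (0 : ℂ) 1,
      HasSum (fun p : ℕ × ℕ => ω p.1 p.2 * ζ ^ p.1 * z ^ p.2) (L (ζ, z))) :
    ∀ m : ℕ, 1 ≤ m → ∀ w ∈ Metric.ball (0 : ℂ) 1, w ≠ 0 →
      ∀ ρ : ℝ, 0 < ρ → ρ < ‖w‖ →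
        ∃ S : ℂ, HasSum (fun l : ℕ => ω m l * w ^ l) S ∧
          -((2 * (Real.pi : ℂ) * Complex.I)⁻¹ *
              ∮ u in C(0, ρ), u ^ (-(m : ℤ)) * deriv f u / (f u - f w)) =
            w ^ (-(m : ℤ)) - (m : ℂ) * S :=
  stmt5_general f L hL hLlog ω hω
end

section
/- Let f : 𝔻 → ℂ be injective and holomorphic with f(𝔻) bounded, let m ≥ 1 be an integer, and let h(z) = z^{−m} (an element of D_∞(𝔻⁻)). Then for every Z ∈ ℂ ∖ closure(f(𝔻)), I_f h(Z) = Φ_m(Z), where Φ_m is the m-th Faber polynomial of f. Equivalently, lim_{r→1⁻} −(1/(2πi)) ∮_{|w|=r} conj(w)^m f′(w)/(f(w)−Z) dw = −(1/(2πi)) ∮_{|w|=s} w^{−m} f′(w)/(f(w)−Z) dw for any s ∈ (0,1) with Z ∉ f({|w| ≤ s}). -/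
/-!
On the circle `|w| = ρ` we have `conj w = ρ² / w`, so the integrand `conj(w)^m f'(w) / (f(w) - Z)`
equals `ρ^{2m}` times the holomorphic integrand `w^{-m} f'(w) / (f(w) - Z)` of the Faber
polynomial. By Cauchy's theorem on annuli the integral of the latter over `C(0, ρ)` does not
depend on `ρ ∈ [s, 1)`, so the integrals in the limit are `ρ^{2m} Φ_m(Z) → Φ_m(Z)`.
-/

open Filter Set Metric Topology ComplexConjugate

theorem Complex.conj_eq_norm_sq_mul_inv (w : ℂ) : conj w = (‖w‖ : ℂ) ^ 2 * w⁻¹ := by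
  rcases eq_or_ne w 0 with rfl | hw
  · simp
  · rw [← Complex.conj_mul', mul_inv_cancel_right₀ hw]

theorem circleIntegral_conj_pow_mul (g : ℂ → ℂ) (m : ℕ) {ρ : ℝ} (hρ : 0 ≤ ρ) :
    (∮ w in C(0, ρ), conj w ^ m * g w) =
      (ρ : ℂ) ^ (2 * m) * ∮ w in C(0, ρ), w ^ (-(m : ℤ)) * g w := by
  rw [← circleIntegral.integral_const_mul]
  refine circleIntegral.integral_congr hρ fun w hw => ?_
  rw [Complex.conj_eq_norm_sq_mul_inv, mem_sphere_zero_iff_norm.1 hw, zpow_neg, zpow_natCast,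
    mul_pow, pow_mul, inv_pow, mul_assoc]

theorem circleIntegral_eq_of_differentiableOn_ball_diff_center {E : Type*}
    [NormedAddCommGroup E] [NormedSpace ℂ E] {c : ℂ} {r ρ R : ℝ} {g : ℂ → E}
    (hg : DifferentiableOn ℂ g (ball c R \ {c})) (hr : 0 < r) (hrρ : r ≤ ρ) (hρR : ρ < R) :
    (∮ w in C(c, ρ), g w) = ∮ w in C(c, r), g w := by
  have hd : ∀ w ∈ ball c R \ {c}, DifferentiableAt ℂ g w := fun w hw =>
    hg.differentiableAt ((isOpen_ball.sdiff isClosed_singleton).mem_nhds hw)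
  refine Complex.circleIntegral_eq_of_differentiable_on_annulus_off_countable hr hrρ
    countable_empty (fun w hw => (hd w ?_).continuousAt.continuousWithinAt) (fun w hw => hd w ?_)
  · exact sdiff_subset_sdiff (closedBall_subset_ball hρR)
      (singleton_subset_iff.2 (mem_ball_self hr)) hw
  · rw [sdiff_empty] at hw
    exact sdiff_subset_sdiff (ball_subset_ball hρR.le)
      (singleton_subset_iff.2 (mem_closedBall_self hr.le)) hw

theorem stmt10_general (f : ℂ → ℂ) (hf : DifferentiableOn ℂ f (Metric.ball 0 1))
    (m : ℕ) (Z : ℂ)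
    (hZ : Z ∉ closure (f '' Metric.ball 0 1))
    (s : ℝ) (hs : s ∈ Set.Ioo (0 : ℝ) 1) :
    Filter.Tendsto (fun ρ : ℝ =>
        -((2 * (Real.pi : ℂ) * Complex.I)⁻¹ *
          ∮ w in C(0, ρ), ((starRingEnd ℂ) w) ^ m * deriv f w / (f w - Z)))
      (nhdsWithin 1 (Set.Iio 1))
      (nhds (-((2 * (Real.pi : ℂ) * Complex.I)⁻¹ *
        ∮ w in C(0, s), w ^ (-(m : ℤ)) * deriv f w / (f w - Z)))) := by
  simp_rw [mul_div_assoc]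
  have hfZ : ∀ w ∈ ball (0 : ℂ) 1, f w - Z ≠ 0 := fun w hw h =>
    hZ (subset_closure ⟨w, hw, sub_eq_zero.1 h⟩)
  have hg : DifferentiableOn ℂ (fun w => w ^ (-(m : ℤ)) * (deriv f w / (f w - Z)))
      (ball 0 1 \ {0}) :=
    (differentiableOn_zpow _ _ (Or.inl fun h => h.2 rfl)).mul
      (((hf.deriv isOpen_ball).div (hf.sub_const Z) hfZ).mono sdiff_subset)
  have hev : (fun ρ : ℝ => ∮ w in C(0, ρ), conj w ^ m * (deriv f w / (f w - Z))) =ᶠ[𝓝[<] 1]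
      fun ρ : ℝ => (ρ : ℂ) ^ (2 * m) *
        ∮ w in C(0, s), w ^ (-(m : ℤ)) * (deriv f w / (f w - Z)) := by
    filter_upwards [Ioo_mem_nhdsLT hs.2] with ρ hρ
    rw [circleIntegral_conj_pow_mul _ _ (hs.1.trans hρ.1).le,
      circleIntegral_eq_of_differentiableOn_ball_diff_center hg hs.1 hρ.1.le hρ.2]
  have hlim : Tendsto (fun ρ : ℝ => (ρ : ℂ) ^ (2 * m)) (𝓝[<] 1) (𝓝 1) := by
    simpa using ((Complex.continuous_ofReal.tendsto 1).pow (2 * m)).mono_left nhdsWithin_le_nhds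
  simpa using (((hlim.mul_const _).congr' hev.symm).const_mul _).neg

/-- The Faber operator applied to `z^{-m}` yields the `m`-th Faber polynomial:
the limiting contour integral with the reflection `conj(w)^m` in place of
`h(1/conj w)` converges, as `ρ → 1⁻`, to the contour integral defining the
Faber polynomial over any circle of radius `s` with `Z ∉ f(closedBall 0 s)`. -/
theorem stmt10 (f : ℂ → ℂ) (hf : DifferentiableOn ℂ f (Metric.ball 0 1))
    (hinj : Set.InjOn f (Metric.ball 0 1))
    (hb : Bornology.IsBounded (f '' Metric.ball 0 1))
    (m : ℕ) (hm : 1 ≤ m) (Z : ℂ)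
    (hZ : Z ∉ closure (f '' Metric.ball 0 1))
    (s : ℝ) (hs : s ∈ Set.Ioo (0 : ℝ) 1)
    (hZs : Z ∉ f '' Metric.closedBall 0 s) :
    Filter.Tendsto (fun ρ : ℝ =>
        -((2 * (Real.pi : ℂ) * Complex.I)⁻¹ *
          ∮ w in C(0, ρ), ((starRingEnd ℂ) w) ^ m * deriv f w / (f w - Z)))
      (nhdsWithin 1 (Set.Iio 1))
      (nhds (-((2 * (Real.pi : ℂ) * Complex.I)⁻¹ *
        ∮ w in C(0, s), w ^ (-(m : ℤ)) * deriv f w / (f w - Z)))) :=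
  stmt10_general f hf m Z hZ s hs
end
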